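/- arXiv:0711.0361 — 3 statements merged into one kernel-verified Lean document; each statement's English description precedes it below -/
import Mathlib

section
/- Let H be a subgroup of G and K₀ a subgroup of K, and assume that h^λ ∈ H for all h ∈ H and λ ∈ K₀. Suppose g₁, g₂ ∈ G, γ₁, γ₂ ∈ K and h ∈ H satisfy h·g₂ = g₁^(γ₁) and ᵍ²γ₂ ∈ K₀. Then g₁^(γ₁·γ₂) ∈ H·(g₂^(γ₂)); in fact g₁^(γ₁·γ₂) = h^(ᵍ²γ₂) · g₂^(γ₂). -/
/-- if `h^λ ∈ H` for all `h ∈ H`, `λ ∈ K₀`, and if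
`h·g₂ = g₁^(γ₁)` with `h ∈ H` and `ᵍ²γ₂ ∈ K₀`, then
`g₁^(γ₁·γ₂) = h^(ᵍ²γ₂) · g₂^(γ₂)` with `h^(ᵍ²γ₂) ∈ H`; in particular
`g₁^(γ₁·γ₂) ∈ H·(g₂^(γ₂))`.

Here `D` is a group with subgroups `G` and `K` such that every element of `D`
factors uniquely as `γ * g` with `γ ∈ K`, `g ∈ G`; `dl g γ = ᵍγ` and
`dr g γ = g^γ` are the dressing transformations, characterized by
`g * γ = (ᵍγ) * (g^γ)`; `H` is a subgroup of `G` and `K₀` a subgroup of `K`. -/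
theorem target_of_product {D : Type*} [Group D] (G K : Subgroup D)
    (dl : G → K → K) (dr : G → K → G)
    (hfact : ∀ (g : G) (γ : K), (g : D) * (γ : D) = (dl g γ : D) * (dr g γ : D))
    (hexists : ∀ d : D, ∃ (γ : K) (g : G), d = (γ : D) * (g : D))
    (huniq : ∀ (γ γ' : K) (g g' : G),
      (γ : D) * (g : D) = (γ' : D) * (g' : D) → γ = γ' ∧ g = g')
    (H : Subgroup G) (K₀ : Subgroup K)
    (hHinv : ∀ h ∈ H, ∀ lam ∈ K₀, dr h lam ∈ H)
    (g₁ g₂ : G) (γ₁ γ₂ : K) (h : G) (hh : h ∈ H)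
    (hcomp : h * g₂ = dr g₁ γ₁) (h₂ : dl g₂ γ₂ ∈ K₀) :
    dr g₁ (γ₁ * γ₂) = dr h (dl g₂ γ₂) * dr g₂ γ₂ ∧ dr h (dl g₂ γ₂) ∈ H := by
  refine ⟨?_, hHinv h hh _ h₂⟩
  have key : ((dl g₁ (γ₁ * γ₂) : K) : D) * ((dr g₁ (γ₁ * γ₂) : G) : D)
      = ((dl g₁ γ₁ * dl h (dl g₂ γ₂) : K) : D)
        * ((dr h (dl g₂ γ₂) * dr g₂ γ₂ : G) : D) := by
    have e1 := hfact g₁ γ₁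
    have e2 := hfact g₂ γ₂
    have e3 := hfact h (dl g₂ γ₂)
    have e0 := hfact g₁ (γ₁ * γ₂)
    have hc : ((h * g₂ : G) : D) = ((dr g₁ γ₁ : G) : D) := by rw [hcomp]
    push_cast at e0 e1 e2 e3 hc ⊢
    rw [← e0]
    calc (g₁ : D) * (γ₁ * γ₂ : D)
        = ((g₁ : D) * γ₁) * γ₂ := by group
      _ = ((dl g₁ γ₁ : D) * (dr g₁ γ₁ : D)) * γ₂ := by rw [e1]
      _ = (dl g₁ γ₁ : D) * ((h : D) * ((g₂ : D) * γ₂)) := by rw [← hc]; group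
      _ = (dl g₁ γ₁ : D) * (((h : D) * (dl g₂ γ₂ : D)) * (dr g₂ γ₂ : D)) := by
          rw [e2]; group
      _ = (dl g₁ γ₁ : D) * (dl h (dl g₂ γ₂) : D) * ((dr h (dl g₂ γ₂) : D) * (dr g₂ γ₂ : D)) := by
          rw [e3]; group
  exact (huniq _ _ _ _ key).2
end

section
/- Let M ∈ M₂(ℂ) with det M = 1. Then there exist A ∈ ℝ with A > 0, N ∈ ℂ, and σ, τ ∈ ℂ with |σ|² − |τ|² = 1 such that M = [[A, N], [0, A⁻¹]] · [[σ, τ], [conj(τ), conj(σ)]] if and only if |M₂₂| > |M₂₁|, i.e. the modulus of the (2,2) entry of M is strictly greater than the modulus of the (2,1) entry. -/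
/-!
If `M = B U` with `B = [[A, N], [0, A⁻¹]]` and `U ∈ SU(1,1)`, the second row of `M` is
`A⁻¹ (conj τ, conj σ)`, and `|σ| > |τ|` because `|σ|² − |τ|² = 1`. Conversely, the second row
forces `σ = A conj M₂₂` and `τ = A conj M₂₁`, hence `A² (|M₂₂|² − |M₂₁|²) = 1`, which is solvable
exactly when `|M₂₂| > |M₂₁|`; the first row and `det M = 1` then determine `N`.
-/

open Matrix Complex

theorem sb_mul_su11_apply_one_zero (A : ℝ) (N σ τ : ℂ) :
    (!![(A : ℂ), N; 0, (A : ℂ)⁻¹] * !![σ, τ; star τ, star σ]) 1 0 = (A : ℂ)⁻¹ * star τ := by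
  simp

theorem sb_mul_su11_apply_one_one (A : ℝ) (N σ τ : ℂ) :
    (!![(A : ℂ), N; 0, (A : ℂ)⁻¹] * !![σ, τ; star τ, star σ]) 1 1 = (A : ℂ)⁻¹ * star σ := by
  simp

theorem norm_lt_norm_of_sq_sub_sq_eq_one {σ τ : ℂ} (h : ‖σ‖ ^ 2 - ‖τ‖ ^ 2 = 1) : ‖τ‖ < ‖σ‖ :=
  (sq_lt_sq₀ (norm_nonneg τ) (norm_nonneg σ)).mp (by linarith)

theorem exists_pos_sq_mul_eq_one {t : ℝ} (ht : 0 < t) : ∃ A : ℝ, 0 < A ∧ A ^ 2 * t = 1 :=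
  ⟨(√t)⁻¹, by positivity, by rw [inv_pow, Real.sq_sqrt ht.le, inv_mul_cancel₀ ht.ne']⟩

theorem eq_sb_mul_su11 {a b c d : ℂ} (hdet : a * d - b * c = 1) {A : ℝ}
    (hA : A ^ 2 * (‖d‖ ^ 2 - ‖c‖ ^ 2) = 1) :
    !![a, b; c, d] = !![(A : ℂ), A * (b * star d - a * star c); 0, (A : ℂ)⁻¹] *
      !![star (A * d), star (A * c); star (star ((A : ℂ) * c)), star (star ((A : ℂ) * d))] := by
  have hAC : (A : ℂ) ^ 2 * (d * starRingEnd ℂ d - c * starRingEnd ℂ c) = 1 := by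
    rw [mul_conj, mul_conj, normSq_eq_norm_sq, normSq_eq_norm_sq]
    exact_mod_cast hA
  have hA0 : (A : ℂ) ≠ 0 := by rintro h; simp [h] at hAC
  ext i j
  fin_cases i <;> fin_cases j <;> simp [Matrix.mul_apply, Fin.sum_univ_two]
  · linear_combination (A ^ 2 * starRingEnd ℂ d) * hdet - a * hAC
  · linear_combination (A ^ 2 * starRingEnd ℂ c) * hdet - b * hAC
  · field_simp
  · field_simp

/-- a matrix `M ∈ SL(2,ℂ)` admits a factorization
`M = [[A, N], [0, A⁻¹]] · [[σ, τ], [conj τ, conj σ]]` with `A > 0` real,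
`N ∈ ℂ` and `|σ|² − |τ|² = 1` if and only if `|M₂₂| > |M₂₁|`. -/
theorem sb_su11_factorization_criterion (M : Matrix (Fin 2) (Fin 2) ℂ)
    (hdet : M.det = 1) :
    (∃ A : ℝ, 0 < A ∧ ∃ N σ τ : ℂ,
      ‖σ‖ ^ 2 - ‖τ‖ ^ 2 = 1 ∧
      M = !![(A : ℂ), N; 0, (A : ℂ)⁻¹] * !![σ, τ; star τ, star σ]) ↔
    ‖M 1 0‖ < ‖M 1 1‖ := by
  constructor
  · rintro ⟨A, hA, N, σ, τ, hστ, rfl⟩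
    rw [sb_mul_su11_apply_one_zero, sb_mul_su11_apply_one_one, norm_mul, norm_mul, norm_star,
      norm_star]
    exact mul_lt_mul_of_pos_left (norm_lt_norm_of_sq_sub_sq_eq_one hστ) (by simpa using hA.ne')
  · intro h
    obtain ⟨A, hA, hA2⟩ := exists_pos_sq_mul_eq_one (t := ‖M 1 1‖ ^ 2 - ‖M 1 0‖ ^ 2)
      (by nlinarith [norm_nonneg (M 1 0)])
    refine ⟨A, hA, _, _, _, ?_, (eta_fin_two M).trans (eq_sb_mul_su11 ?_ hA2)⟩
    · simp only [norm_star, norm_mul, norm_real, Real.norm_eq_abs, mul_pow, sq_abs]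
      linarith
    · rwa [det_fin_two] at hdet
end

section
/- There exist α, β ∈ ℂ with |α|² − |β|² = 1 and t ∈ ℝ such that the matrix [[α, β], [conj(β), conj(α)]] · [[1, t], [0, 1]] cannot be written in the form [[A, N], [0, A⁻¹]] · [[σ, τ], [conj(τ), conj(σ)]] for any A ∈ ℝ with A > 0, N ∈ ℂ, and σ, τ ∈ ℂ with |σ|² − |τ|² = 1. (For instance one may take α, β real with β ≠ 0; hence the dressing action of SB(2,ℂ) on SU(1,1) is not complete.) -/
open Matrix Complex

/-!
The bottom row of `b · u`, with `b = [[a, N], [0, a⁻¹]]` and `u ∈ SU(1,1)`, is `a⁻¹ (conj τ, conj σ)`,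
so `|d|² - |c|² = |a|⁻² (|σ|² - |τ|²) > 0` for every such product with bottom row `(c, d)`.
For `α = √2`, `β = 1`, `t = -√2` the bottom row of `g · [[1, t], [0, 1]]` is `(1, 0)`,
which violates this inequality.
-/

lemma mul_su11_apply_one_zero (a N σ τ : ℂ) :
    (!![a, N; 0, a⁻¹] * !![σ, τ; star τ, star σ]) 1 0 = a⁻¹ * star τ := by
  simp [Matrix.mul_apply, Fin.sum_univ_two]

lemma mul_su11_apply_one_one (a N σ τ : ℂ) :
    (!![a, N; 0, a⁻¹] * !![σ, τ; star τ, star σ]) 1 1 = a⁻¹ * star σ := by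
  simp [Matrix.mul_apply, Fin.sum_univ_two]

lemma norm_sq_sub_norm_sq_mul_su11_bottom_row (a N σ τ : ℂ) :
    ‖(!![a, N; 0, a⁻¹] * !![σ, τ; star τ, star σ]) 1 1‖ ^ 2
        - ‖(!![a, N; 0, a⁻¹] * !![σ, τ; star τ, star σ]) 1 0‖ ^ 2
      = ‖a‖⁻¹ ^ 2 * (‖σ‖ ^ 2 - ‖τ‖ ^ 2) := by
  rw [mul_su11_apply_one_one, mul_su11_apply_one_zero, norm_mul, norm_mul, norm_inv,
    norm_star, norm_star]
  ring

lemma norm_sq_mul_su11_one_zero_lt {a N σ τ : ℂ} (ha : a ≠ 0) (hστ : ‖σ‖ ^ 2 - ‖τ‖ ^ 2 = 1) :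
    ‖(!![a, N; 0, a⁻¹] * !![σ, τ; star τ, star σ]) 1 0‖ ^ 2
      < ‖(!![a, N; 0, a⁻¹] * !![σ, τ; star τ, star σ]) 1 1‖ ^ 2 := by
  have hpos : 0 < ‖a‖⁻¹ ^ 2 * (‖σ‖ ^ 2 - ‖τ‖ ^ 2) := by
    rw [hστ, mul_one]
    positivity
  linarith [norm_sq_sub_norm_sq_mul_su11_bottom_row a N σ τ]

/-- there exist `α, β ∈ ℂ` with `|α|² − |β|² = 1` and `t ∈ ℝ`
such that `[[α, β], [conj β, conj α]] · [[1, t], [0, 1]]` admits no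
factorization `[[A, N], [0, A⁻¹]] · [[σ, τ], [conj τ, conj σ]]` with `A > 0`
real, `N ∈ ℂ` and `|σ|² − |τ|² = 1`; hence the dressing action of `SB(2,ℂ)` on
`SU(1,1)` is not complete. -/
theorem su11_dressing_not_complete :
    ∃ (α β : ℂ) (t : ℝ),
      ‖α‖ ^ 2 - ‖β‖ ^ 2 = 1 ∧
      ∀ A : ℝ, 0 < A → ∀ N σ τ : ℂ,
        ‖σ‖ ^ 2 - ‖τ‖ ^ 2 = 1 →
        !![α, β; star β, star α] * !![1, (t : ℂ); 0, 1] ≠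
          !![(A : ℂ), N; 0, (A : ℂ)⁻¹] * !![σ, τ; star τ, star σ] := by
  refine ⟨(√2 : ℝ), 1, -√2, ?_, ?_⟩
  · norm_num [Complex.norm_real]
  · intro A hA N σ τ hστ heq
    have hlt := norm_sq_mul_su11_one_zero_lt (N := N) (ofReal_ne_zero.mpr hA.ne') hστ
    rw [← heq] at hlt
    norm_num [Matrix.mul_apply, Fin.sum_univ_two] at hlt
end
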